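/- Let G be a nilpotent group of class 3 and x,y ∈ G. Then for nonnegative integers i,j,k,l: [x^i y^j, x^k y^l] = [x,y]^{il-jk} · [x,y,x]^{l·C(i,2) - j·C(k,2)} · [x,y,y]^{ijl - kjl + i·C(l,2) - k·C(j,2)}. -/

import Mathlib

/-!
Put `c = [x,y]`, `u = [c,x]`, `v = [c,y]` and write `a^g = g⁻¹ a g`. In class 3 the elements `u`
and `v` are central, and `x^y = x c`, `c^x = c u`, `c^y = c v`. Iterating these rules the central
corrections pile up triangularly, which is where the binomial coefficients come from:
`x^(y^n) = x c^n v^C(n,2)` and `(x c^m)^n = x^n c^(mn) u^(m C(n,2))`. This gives closed forms for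
the conjugates of `x^i` and `y^j` by `B = x^k y^l`; then `[A,B] = A⁻¹ A^B` for `A = x^i y^j`, and
collecting the central factors yields the formula.
-/

open Subgroup
open scoped commutatorElement

-- Mathlib's `⁅a, b⁆` is `a * b * a⁻¹ * b⁻¹`, so `pcomm a b = ⁅a⁻¹, b⁻¹⁆`.
def pcomm {G : Type*} [Group G] (a b : G) : G := a⁻¹ * b⁻¹ * a * b

section

variable {G : Type*} [Group G]

theorem pcomm_eq_inv_mul_conj (a b : G) : pcomm a b = a⁻¹ * (b⁻¹ * a * b) := by
  simp only [pcomm]; group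

theorem conj_eq_mul_pcomm (a g : G) : g⁻¹ * a * g = a * pcomm a g := by
  simp only [pcomm]; group

theorem pcomm_inv (a b : G) : (pcomm a b)⁻¹ = pcomm b a := by
  simp only [pcomm]; group

theorem pcomm_mem_lowerCentralSeries_succ {a : G} {n : ℕ}
    (ha : a ∈ (⊤ : Subgroup G).lowerCentralSeries n) (b : G) :
    pcomm a b ∈ (⊤ : Subgroup G).lowerCentralSeries (n + 1) := by
  rw [show pcomm a b = ⁅a⁻¹, b⁻¹⁆ by simp [pcomm, commutatorElement_def]]
  exact commutator_mem_commutator (inv_mem ha) (mem_top _)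

theorem lowerCentralSeries_le_center_of_succ_eq_bot {n : ℕ}
    (h : (⊤ : Subgroup G).lowerCentralSeries (n + 1) = ⊥) :
    (⊤ : Subgroup G).lowerCentralSeries n ≤ center G := by
  intro w hw
  rw [mem_center_iff]
  intro g
  have hwg : ⁅w, g⁆ = 1 := by
    rw [← mem_bot, ← h]
    exact commutator_mem_commutator hw (mem_top g)
  exact (commutatorElement_eq_one_iff_mul_comm.mp hwg).symm

theorem inv_mul_mul_pow (g a : G) (n : ℕ) : (g⁻¹ * a * g) ^ n = g⁻¹ * a ^ n * g := by
  simpa using conj_pow (a := g⁻¹) (b := a) (i := n)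

theorem inv_mul_mul_zpow (g a : G) (n : ℤ) : (g⁻¹ * a * g) ^ n = g⁻¹ * a ^ n * g := by
  simpa using conj_zpow (a := g⁻¹) (b := a) (i := n)

variable {g a c u z : G}

theorem commute_of_mem_center (hz : z ∈ center G) (g : G) : Commute z g :=
  (mem_center_iff.mp hz g).symm

theorem mul_right_comm_of_mem_center (hz : z ∈ center G) (a b : G) : a * z * b = a * b * z := by
  rw [mul_assoc, (commute_of_mem_center hz b).eq, mul_assoc]

theorem conj_mul_of_mem_center (hz : z ∈ center G) (g a : G) :
    g⁻¹ * (a * z) * g = g⁻¹ * a * g * z := by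
  rw [← mul_assoc, mul_right_comm_of_mem_center hz]

theorem conj_pow_eq_mul_pow_of_central (hc : g⁻¹ * c * g = c * u) (hu : u ∈ center G) (n : ℕ) :
    (g ^ n)⁻¹ * c * g ^ n = c * u ^ n := by
  induction n with
  | zero => simp
  | succ n ih =>
    calc (g ^ (n + 1))⁻¹ * c * g ^ (n + 1) = g⁻¹ * ((g ^ n)⁻¹ * c * g ^ n) * g := by group
      _ = c * u ^ (n + 1) := by
        rw [ih, conj_mul_of_mem_center (pow_mem hu n), hc, pow_succ']; group

theorem conj_pow_zpow_eq_zpow_mul_zpow_of_central (hc : g⁻¹ * c * g = c * u) (hu : u ∈ center G)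
    (m : ℤ) (n : ℕ) : (g ^ n)⁻¹ * c ^ m * g ^ n = c ^ m * u ^ (m * n) := by
  rw [← inv_mul_mul_zpow, conj_pow_eq_mul_pow_of_central hc hu,
    (commute_of_mem_center (pow_mem hu n) c).symm.mul_zpow, mul_comm m, zpow_mul, zpow_natCast]

theorem conj_pow_eq_mul_pow_mul_pow_choose_of_central (ha : g⁻¹ * a * g = a * c)
    (hc : g⁻¹ * c * g = c * u) (hu : u ∈ center G) (n : ℕ) :
    (g ^ n)⁻¹ * a * g ^ n = a * c ^ n * u ^ n.choose 2 := by
  induction n with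
  | zero => simp
  | succ n ih =>
    have hcn : g⁻¹ * c ^ n * g = c ^ n * u ^ n := by
      simpa using conj_pow_zpow_eq_zpow_mul_zpow_of_central hc hu n 1
    calc (g ^ (n + 1))⁻¹ * a * g ^ (n + 1) = g⁻¹ * ((g ^ n)⁻¹ * a * g ^ n) * g := by group
      _ = (g⁻¹ * a * g) * (g⁻¹ * c ^ n * g) * u ^ n.choose 2 := by
        rw [ih, conj_mul_of_mem_center (pow_mem hu _)]; group
      _ = a * c ^ (n + 1) * u ^ (n + 1).choose 2 := by
        rw [ha, hcn, Nat.choose_succ_succ', Nat.choose_one_right]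
        group

theorem mul_zpow_pow_of_central (hc : a⁻¹ * c * a = c * u) (hu : u ∈ center G) (m : ℤ) (n : ℕ) :
    (a * c ^ m) ^ n = a ^ n * c ^ (m * n) * u ^ (m * n.choose 2) := by
  induction n with
  | zero => simp
  | succ n ih =>
    have hcn : a⁻¹ * c ^ (m * n) * a = c ^ (m * n) * u ^ (m * n) := by
      simpa using conj_pow_zpow_eq_zpow_mul_zpow_of_central hc hu (m * n) 1
    have hz := commute_of_mem_center (zpow_mem hu (m * n.choose 2)) (a * c ^ m)
    calc (a * c ^ m) ^ (n + 1) = a ^ n * c ^ (m * n) * (u ^ (m * n.choose 2) * (a * c ^ m)) := by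
          rw [pow_succ, ih]; group
      _ = a ^ (n + 1) * (a⁻¹ * c ^ (m * n) * a) * c ^ m * u ^ (m * n.choose 2) := by
          rw [hz.eq]; group
      _ = a ^ (n + 1) * c ^ (m * n) * u ^ (m * n) * c ^ m * u ^ (m * n.choose 2) := by
          rw [hcn]; group
      _ = a ^ (n + 1) * c ^ (m * (n + 1 : ℕ)) * u ^ (m * (n + 1).choose 2) := by
          rw [mul_right_comm_of_mem_center (zpow_mem hu _), Nat.choose_succ_succ',
            Nat.choose_one_right]
          push_cast; group

variable {x y v : G}

theorem pcomm_pow_left_of_central (hxy : y⁻¹ * x * y = x * c) (hcx : x⁻¹ * c * x = c * u)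
    (hu : u ∈ center G) (k : ℕ) : pcomm (x ^ k) y = c ^ (k : ℤ) * u ^ (k.choose 2 : ℤ) := by
  rw [pcomm_eq_inv_mul_conj, ← inv_mul_mul_pow, hxy, ← zpow_one c, mul_zpow_pow_of_central hcx hu]
  group

theorem conj_pow_left_of_central (hxy : y⁻¹ * x * y = x * c) (hcx : x⁻¹ * c * x = c * u)
    (hcy : y⁻¹ * c * y = c * v) (hu : u ∈ center G) (hv : v ∈ center G) (i k l : ℕ) :
    (x ^ k * y ^ l)⁻¹ * x ^ i * (x ^ k * y ^ l) =
      x ^ i * c ^ ((l : ℤ) * i) * (u ^ ((l : ℤ) * i.choose 2) * v ^ ((i : ℤ) * l.choose 2)) := by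
  have hyl : (y ^ l)⁻¹ * x * y ^ l = x * c ^ (l : ℤ) * v ^ l.choose 2 := by
    rw [zpow_natCast]
    exact conj_pow_eq_mul_pow_mul_pow_choose_of_central hxy hcy hv l
  calc (x ^ k * y ^ l)⁻¹ * x ^ i * (x ^ k * y ^ l) = ((y ^ l)⁻¹ * x * y ^ l) ^ i := by
        rw [inv_mul_mul_pow]; group
    _ = _ := by
      rw [hyl, (commute_of_mem_center (pow_mem hv _) _).symm.mul_pow,
        mul_zpow_pow_of_central hcx hu, ← pow_mul]
      group

theorem conj_pow_right_of_central (hxy : y⁻¹ * x * y = x * c) (hcx : x⁻¹ * c * x = c * u)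
    (hcy : y⁻¹ * c * y = c * v) (hu : u ∈ center G) (hv : v ∈ center G) (j k l : ℕ) :
    (x ^ k * y ^ l)⁻¹ * y ^ j * (x ^ k * y ^ l) =
      y ^ j * c ^ (-((k : ℤ) * j)) *
        (u ^ (-((j : ℤ) * k.choose 2)) * v ^ (-((k : ℤ) * j * l) - k * j.choose 2)) := by
  have hxk : (x ^ k)⁻¹ * y * x ^ k = y * c ^ (-(k : ℤ)) * u ^ (-(k.choose 2 : ℤ)) := by
    rw [conj_eq_mul_pcomm, ← pcomm_inv, pcomm_pow_left_of_central hxy hcx hu,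
      (commute_of_mem_center (zpow_mem hu _) _).symm.mul_inv, zpow_neg, zpow_neg, mul_assoc]
  have hy : (x ^ k * y ^ l)⁻¹ * y * (x ^ k * y ^ l) =
      y * c ^ (-(k : ℤ)) * (u ^ (-(k.choose 2 : ℤ)) * v ^ (-(k : ℤ) * l)) := by
    calc (x ^ k * y ^ l)⁻¹ * y * (x ^ k * y ^ l)
        = (y ^ l)⁻¹ * ((x ^ k)⁻¹ * y * x ^ k) * y ^ l := by group
      _ = y * ((y ^ l)⁻¹ * c ^ (-(k : ℤ)) * y ^ l) * u ^ (-(k.choose 2 : ℤ)) := by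
        rw [hxk, conj_mul_of_mem_center (zpow_mem hu _)]; group
      _ = _ := by
        rw [conj_pow_zpow_eq_zpow_mul_zpow_of_central hcy hv, ← mul_assoc y,
          mul_right_comm_of_mem_center (zpow_mem hv _)]
        group
  rw [← inv_mul_mul_pow, hy,
    (commute_of_mem_center (mul_mem (zpow_mem hu _) (zpow_mem hv _)) _).symm.mul_pow,
    mul_zpow_pow_of_central hcy hv, (commute_of_mem_center (zpow_mem hu _) _).mul_pow,
    ← mul_assoc, mul_right_comm_of_mem_center (zpow_mem hv _)]
  group

theorem pcomm_pow_mul_pow_of_central (hxy : y⁻¹ * x * y = x * c) (hcx : x⁻¹ * c * x = c * u)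
    (hcy : y⁻¹ * c * y = c * v) (hu : u ∈ center G) (hv : v ∈ center G) (i j k l : ℕ) :
    pcomm (x ^ i * y ^ j) (x ^ k * y ^ l) =
      c ^ ((i : ℤ) * l - (j : ℤ) * k) * u ^ ((l : ℤ) * i.choose 2 - (j : ℤ) * k.choose 2) *
        v ^ ((i : ℤ) * j * l - (k : ℤ) * j * l + (i : ℤ) * l.choose 2 - (k : ℤ) * j.choose 2) := by
  have hZ₁ := mul_mem (zpow_mem hu ((l : ℤ) * i.choose 2)) (zpow_mem hv ((i : ℤ) * l.choose 2))
  calc pcomm (x ^ i * y ^ j) (x ^ k * y ^ l)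
      = (x ^ i * y ^ j)⁻¹ * (((x ^ k * y ^ l)⁻¹ * x ^ i * (x ^ k * y ^ l)) *
          ((x ^ k * y ^ l)⁻¹ * y ^ j * (x ^ k * y ^ l))) := by
        rw [pcomm_eq_inv_mul_conj]; group
    _ = (y ^ j)⁻¹ * c ^ ((l : ℤ) * i) * (u ^ ((l : ℤ) * i.choose 2) * v ^ ((i : ℤ) * l.choose 2)) *
          (y ^ j * c ^ (-((k : ℤ) * j))) *
          (u ^ (-((j : ℤ) * k.choose 2)) * v ^ (-((k : ℤ) * j * l) - k * j.choose 2)) := by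
        rw [conj_pow_left_of_central hxy hcx hcy hu hv,
          conj_pow_right_of_central hxy hcx hcy hu hv]
        group
    _ = ((y ^ j)⁻¹ * c ^ ((l : ℤ) * i) * y ^ j) * c ^ (-((k : ℤ) * j)) *
          ((u ^ ((l : ℤ) * i.choose 2) * v ^ ((i : ℤ) * l.choose 2)) *
            (u ^ (-((j : ℤ) * k.choose 2)) * v ^ (-((k : ℤ) * j * l) - k * j.choose 2))) := by
        rw [mul_right_comm_of_mem_center hZ₁]; group
    _ = c ^ ((l : ℤ) * i) * c ^ (-((k : ℤ) * j)) * (v ^ ((l : ℤ) * i * j) *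
          ((u ^ ((l : ℤ) * i.choose 2) * u ^ (-((j : ℤ) * k.choose 2))) *
            (v ^ ((i : ℤ) * l.choose 2) * v ^ (-((k : ℤ) * j * l) - k * j.choose 2)))) := by
        rw [conj_pow_zpow_eq_zpow_mul_zpow_of_central hcy hv,
          mul_right_comm_of_mem_center (zpow_mem hv ((l : ℤ) * i * j)),
          (commute_of_mem_center (zpow_mem hv ((i : ℤ) * l.choose 2)) _).mul_mul_mul_comm]
        group
    _ = _ := by
      rw [← mul_assoc (v ^ _), (commute_of_mem_center (zpow_mem hv _) _).eq]
      group

end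

/-- In a nilpotent group of class 3, for nonnegative integers i,j,k,l:
`[xⁱyʲ, xᵏyˡ] = [x,y]^{il-jk} [x,y,x]^{l·C(i,2)-j·C(k,2)} [x,y,y]^{ijl-kjl+i·C(l,2)-k·C(j,2)}`. -/
theorem stmt_7 {G : Type*} [Group G] (h4 : (⊤ : Subgroup G).lowerCentralSeries 3 = ⊥)
    (x y : G) (i j k l : ℕ) :
    pcomm (x ^ i * y ^ j) (x ^ k * y ^ l) =
      (pcomm x y) ^ ((i : ℤ) * l - (j : ℤ) * k) *
        (pcomm (pcomm x y) x) ^ ((l : ℤ) * Nat.choose i 2 - (j : ℤ) * Nat.choose k 2) *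
        (pcomm (pcomm x y) y) ^
          ((i : ℤ) * j * l - (k : ℤ) * j * l + (i : ℤ) * Nat.choose l 2 -
            (k : ℤ) * Nat.choose j 2) := by
  have hc : pcomm x y ∈ (⊤ : Subgroup G).lowerCentralSeries 1 :=
    pcomm_mem_lowerCentralSeries_succ (mem_top x) y
  have hcentral := lowerCentralSeries_le_center_of_succ_eq_bot (n := 2) h4
  exact pcomm_pow_mul_pow_of_central (conj_eq_mul_pcomm x y) (conj_eq_mul_pcomm _ x)
    (conj_eq_mul_pcomm _ y) (hcentral (pcomm_mem_lowerCentralSeries_succ hc x))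
    (hcentral (pcomm_mem_lowerCentralSeries_succ hc y)) i j k l
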